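/- Let W : ℂ^{d_A} → ℂ^{M} be an isometry (W†W = 1_A), U ∈ U(M) a unitary, {|z⟩}_{z=1}^{M} an orthonormal basis of ℂ^{M}, and for each z let B_z be a d_A × d_A complex matrix with operator norm ‖B_z‖ ≤ 1/d_A. Then ‖Σ_{z=1}^{M} (W B_z W† U† |z⟩⟨z| − |z⟩⟨z| U W B_z W†)‖₂ ≤ 2/√d_A, where ‖·‖₂ is the Hilbert–Schmidt (Frobenius) norm. -/

import Mathlib

/- Common definitions: trace norm, trace distance, Kronecker powers, outer products,
post-measurement ensembles, row ensembles of isometries, and Haar moment operators. -/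

open scoped BigOperators ComplexConjugate ComplexOrder
open MeasureTheory Matrix

noncomputable section

instance {m n : Type*} : MeasurableSpace (Matrix m n ℂ) := borel _
instance {m n : Type*} : BorelSpace (Matrix m n ℂ) := ⟨rfl⟩

/-- The positive semidefinite square root of a positive semidefinite matrix (as in the older
Mathlib, where `Matrix.PosSemidef.sqrt` was defined this way). -/
def Matrix.PosSemidef.sqrt {n 𝕜 : Type*} [Fintype n] [RCLike 𝕜] [DecidableEq n]
    {A : Matrix n n 𝕜} (hA : A.PosSemidef) : Matrix n n 𝕜 :=
  hA.1.eigenvectorUnitary.1 * diagonal ((↑) ∘ Real.sqrt ∘ hA.1.eigenvalues) *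
    (star hA.1.eigenvectorUnitary : Matrix n n 𝕜)

/-- The trace norm (Schatten 1-norm) `‖A‖₁ = Tr[√(AᴴA)]`. -/
def traceNorm {n : Type*} [Fintype n] [DecidableEq n] (A : Matrix n n ℂ) : ℝ :=
  ((Matrix.posSemidef_conjTranspose_mul_self A).sqrt.trace).re

/-- The trace distance `D(A,B) = ‖A - B‖₁ / 2`. -/
def traceDist {n : Type*} [Fintype n] [DecidableEq n] (A B : Matrix n n ℂ) : ℝ :=
  traceNorm (A - B) / 2

/-- The Hilbert-Schmidt (Frobenius) norm `‖A‖₂ = √(Tr[AᴴA])`. -/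
def hsNorm {m n : Type*} [Fintype m] [Fintype n] (A : Matrix m n ℂ) : ℝ :=
  Real.sqrt ((Aᴴ * A).trace).re

/-- The `k`-fold tensor (Kronecker) power of a matrix on `ℂ^d`,
as an operator on `(ℂ^d)^{⊗ k}`. -/
def tpow {d : ℕ} (ρ : Matrix (Fin d) (Fin d) ℂ) (k : ℕ) :
    Matrix (Fin k → Fin d) (Fin k → Fin d) ℂ :=
  Matrix.of fun x y => ∏ i, ρ (x i) (y i)

/-- The tensor product `ρ^{⊗ l} ⊗ A ⊗ ρ^{⊗ (k - (l+1))}` on `(ℂ^d)^{⊗ k}`,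
with `A` inserted at position `l`. -/
def tpowIns {d : ℕ} (ρ A : Matrix (Fin d) (Fin d) ℂ) (k l : ℕ) :
    Matrix (Fin k → Fin d) (Fin k → Fin d) ℂ :=
  Matrix.of fun x y => ∏ i : Fin k, if (i : ℕ) = l then A (x i) (y i) else ρ (x i) (y i)

/-- The outer product (rank-one projection for a unit vector) `|v⟩⟨v|`. -/
def outer {d : ℕ} (v : Fin d → ℂ) : Matrix (Fin d) (Fin d) ℂ :=
  Matrix.of fun i j => v i * star (v j)

/-- Squared Euclidean norm of a vector in `ℂ^d`. -/
def nsq {d : ℕ} (v : Fin d → ℂ) : ℝ := ∑ i, Complex.normSq (v i)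

/-- Euclidean norm of a vector in `ℂ^d`. -/
def l2norm {d : ℕ} (v : Fin d → ℂ) : ℝ := Real.sqrt (nsq v)

/-- The normalization `v / ‖v‖` of a vector. -/
def normalizeVec {d : ℕ} (v : Fin d → ℂ) : Fin d → ℂ :=
  fun i => v i / (Real.sqrt (nsq v) : ℂ)

/-- For an unnormalized vector `v` with weight `p = ‖v‖²`, the contribution
`p (|v/‖v‖⟩⟨v/‖v‖|)^{⊗ k}` to a `k`-th moment operator (zero when `v = 0`,
i.e. the ensemble member occurs with probability zero). -/
def momentTerm {d : ℕ} (v : Fin d → ℂ) (k : ℕ) :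
    Matrix (Fin k → Fin d) (Fin k → Fin d) ℂ :=
  if v = 0 then 0 else ((nsq v : ℝ) : ℂ) • tpow (outer (normalizeVec v)) k

/-- The `k`-th moment operator `∑_{z : v_z ≠ 0} p_z (|ψ_z⟩⟨ψ_z|)^{⊗ k}` of the row ensemble
induced by `V : ℂ^{d_A} → ℂ^M` with respect to the orthonormal basis `e` of `ℂ^M`:
`⟨v_z| := ⟨z|V`, `|ψ_z⟩ := |v_z⟩/‖v_z‖`, `p_z := ‖v_z‖²/d_A`. -/
def rowMoment {dA M : ℕ} (V : Matrix (Fin M) (Fin dA) ℂ) (e : Fin M → Fin M → ℂ) (k : ℕ) :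
    Matrix (Fin k → Fin dA) (Fin k → Fin dA) ℂ :=
  ((dA : ℂ))⁻¹ • ∑ z, momentTerm (fun j => star (Matrix.vecMul (star (e z)) V j)) k

/-- The `k`-th moment operator `∑_{z : p_z > 0} p_z (|ψ_z⟩⟨ψ_z|)^{⊗ k}` of the
post-measurement ensemble of the pure state `Ψ ∈ ℂ^{d_A} ⊗ ℂ^M` measured on the second
factor in the orthonormal basis `b`: `p_z := ⟨Ψ|(1 ⊗ |b_z⟩⟨b_z|)|Ψ⟩` and
`|ψ_z⟩ := (1 ⊗ ⟨b_z|)|Ψ⟩ / √p_z`. -/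
def postMoment {dA M : ℕ} (Ψ : Fin dA × Fin M → ℂ) (b : Fin M → (Fin M → ℂ)) (k : ℕ) :
    Matrix (Fin k → Fin dA) (Fin k → Fin dA) ℂ :=
  ∑ z, momentTerm (fun i => dotProduct (star (b z)) (fun w => Ψ (i, w))) k

/-- The `k`-th Haar moment operator `∫ (U|e₁⟩⟨e₁|Uᴴ)^{⊗ k} dU` on `(ℂ^d)^{⊗ k}`,
where `ν` is the (normalized) Haar measure on the unitary group `U(d)`. -/
def haarMoment {d : ℕ} [NeZero d] (ν : Measure (Matrix.unitaryGroup (Fin d) ℂ)) (k : ℕ) :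
    Matrix (Fin k → Fin d) (Fin k → Fin d) ℂ :=
  Matrix.of fun x y =>
    ∫ U, (∏ i, ((U : Matrix (Fin d) (Fin d) ℂ) (x i) 0 *
      star ((U : Matrix (Fin d) (Fin d) ℂ) (y i) 0))) ∂ν

lemma hsNorm_eq {m n : Type*} [Fintype m] [Fintype n] (A : Matrix m n ℂ) :
    hsNorm A = Real.sqrt (∑ i, ∑ j, Complex.normSq (A i j)) := by
  unfold hsNorm
  congr 1
  simp only [Matrix.trace, Matrix.diag, Matrix.mul_apply, Matrix.conjTranspose_apply,
    Complex.re_sum]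
  rw [Finset.sum_comm]
  congr 1; ext i; congr 1; ext j
  rw [mul_comm, Complex.star_def, Complex.mul_conj]
  simp

lemma hsNorm_sub_le {m n : Type*} [Fintype m] [Fintype n] (A B : Matrix m n ℂ) :
    hsNorm (A - B) ≤ hsNorm A + hsNorm B := by
  have key : ∀ C : Matrix m n ℂ,
      hsNorm C = ‖(WithLp.equiv 2 (m × n → ℂ)).symm (fun p => C p.1 p.2)‖ := by
    intro C
    rw [hsNorm_eq, EuclideanSpace.norm_eq]
    congr 1
    rw [Fintype.sum_prod_type]
    refine Finset.sum_congr rfl fun i _ => Finset.sum_congr rfl fun j _ => ?_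
    rw [Complex.normSq_eq_norm_sq]
    rfl
  rw [key, key, key]
  exact norm_sub_le ((WithLp.equiv 2 (m × n → ℂ)).symm fun p => A p.1 p.2)
    ((WithLp.equiv 2 (m × n → ℂ)).symm fun p => B p.1 p.2)

lemma sum_normSq_orth {M N N' : ℕ} (a : Fin M → Fin N' → ℂ) (c : Fin M → Fin N → ℂ)
    (hc : ∀ z w, ∑ k, conj (c z k) * c w k = if z = w then 1 else 0) :
    ∑ i, ∑ k, Complex.normSq (∑ z, a z i * c z k) = ∑ z, nsq (a z) := by
  have main : (↑(∑ i, ∑ k, Complex.normSq (∑ z, a z i * c z k)) : ℂ)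
      = (↑(∑ z, nsq (a z)) : ℂ) := by
    push_cast
    have H : ∀ (i : Fin N') (k : Fin N),
        (↑(Complex.normSq (∑ z, a z i * c z k)) : ℂ)
        = ∑ z, ∑ w, (conj (a z i) * a w i) * (conj (c z k) * c w k) := by
      intro i k
      rw [Complex.normSq_eq_conj_mul_self, map_sum, Finset.sum_mul_sum]
      refine Finset.sum_congr rfl fun z _ => Finset.sum_congr rfl fun w _ => ?_
      simp only [_root_.map_mul]
      ring
    calc ∑ i, ∑ k, (↑(Complex.normSq (∑ z, a z i * c z k)) : ℂ)
        = ∑ p : Fin N' × Fin N, ∑ q : Fin M × Fin M,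
            (conj (a q.1 p.1) * a q.2 p.1) * (conj (c q.1 p.2) * c q.2 p.2) := by
          rw [Fintype.sum_prod_type]
          refine Finset.sum_congr rfl fun i _ => Finset.sum_congr rfl fun k _ => ?_
          rw [H, Fintype.sum_prod_type]
      _ = ∑ q : Fin M × Fin M, ∑ p : Fin N' × Fin N,
            (conj (a q.1 p.1) * a q.2 p.1) * (conj (c q.1 p.2) * c q.2 p.2) :=
          Finset.sum_comm
      _ = ∑ z, ∑ w, (∑ i, conj (a z i) * a w i) * (∑ k, conj (c z k) * c w k) := by
          rw [Fintype.sum_prod_type]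
          refine Finset.sum_congr rfl fun z _ => Finset.sum_congr rfl fun w _ => ?_
          rw [Fintype.sum_prod_type, Finset.sum_mul_sum]
      _ = ∑ z, ∑ i, conj (a z i) * a z i := by
          refine Finset.sum_congr rfl fun z _ => ?_
          rw [Finset.sum_congr rfl fun w _ => by rw [hc]]
          simp
      _ = ∑ z, ∑ i, (↑(Complex.normSq (a z i)) : ℂ) := by
          refine Finset.sum_congr rfl fun z _ => Finset.sum_congr rfl fun i _ => ?_
          rw [Complex.normSq_eq_conj_mul_self]
      _ = ∑ z, (↑(nsq (a z)) : ℂ) := by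
          refine Finset.sum_congr rfl fun z _ => ?_
          unfold nsq; push_cast; rfl
  exact_mod_cast main

lemma nsq_mulVec {m n : ℕ} (G : Matrix (Fin m) (Fin n) ℂ) (u : Fin n → ℂ) :
    (↑(nsq (G.mulVec u)) : ℂ) = ∑ j, ∑ j', conj (u j) * u j' * (Gᴴ * G) j j' := by
  unfold nsq
  push_cast
  calc ∑ i, (↑(Complex.normSq (G.mulVec u i)) : ℂ)
      = ∑ i, ∑ j, ∑ j', (conj (G i j) * G i j') * (conj (u j) * u j') := by
        refine Finset.sum_congr rfl fun i _ => ?_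
        rw [Complex.normSq_eq_conj_mul_self]
        simp only [Matrix.mulVec, dotProduct, map_sum, _root_.map_mul, Finset.sum_mul_sum]
        refine Finset.sum_congr rfl fun j _ => Finset.sum_congr rfl fun j' _ => ?_
        ring_nf
    _ = ∑ j, ∑ j', conj (u j) * u j' * (Gᴴ * G) j j' := by
        rw [Finset.sum_comm]
        refine Finset.sum_congr rfl fun j _ => ?_
        rw [Finset.sum_comm]
        refine Finset.sum_congr rfl fun j' _ => ?_
        simp only [Matrix.mul_apply, Matrix.conjTranspose_apply, Finset.mul_sum,
          Finset.sum_mul, Complex.star_def]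
        refine Finset.sum_congr rfl fun i _ => ?_
        ring

lemma nsq_nonneg {n : ℕ} (v : Fin n → ℂ) : 0 ≤ nsq v :=
  Finset.sum_nonneg fun _ _ => Complex.normSq_nonneg _

lemma l2norm_nonneg {n : ℕ} (v : Fin n → ℂ) : 0 ≤ l2norm v := Real.sqrt_nonneg _

lemma l2norm_eq {n : ℕ} (v : Fin n → ℂ) :
    l2norm v = ‖(WithLp.equiv 2 (Fin n → ℂ)).symm v‖ := by
  rw [l2norm, EuclideanSpace.norm_eq]
  congr 1
  refine Finset.sum_congr rfl fun i _ => ?_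
  rw [Complex.normSq_eq_norm_sq]
  rfl

lemma nsq_eq_sq {n : ℕ} (v : Fin n → ℂ) : nsq v = l2norm v ^ 2 := by
  rw [l2norm, Real.sq_sqrt (nsq_nonneg v)]

lemma nsq_eq_re_dot {n : ℕ} (v : Fin n → ℂ) : nsq v = (dotProduct (star v) v).re := by
  unfold nsq
  rw [dotProduct, Complex.re_sum]
  refine Finset.sum_congr rfl fun i _ => ?_
  simp [Complex.normSq_apply, Complex.star_def, Complex.mul_re]

lemma l2norm_conjTranspose_mulVec_le {n : ℕ} (Bz : Matrix (Fin n) (Fin n) ℂ) (c : ℝ)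
    (h : ∀ v, l2norm (Bz *ᵥ v) ≤ c * l2norm v) (v : Fin n → ℂ) :
    l2norm (Bzᴴ *ᵥ v) ≤ c * l2norm v := by
  set w := Bzᴴ *ᵥ v with hw
  have key : l2norm w ^ 2 = (dotProduct (star v) (Bz *ᵥ w)).re := by
    rw [← nsq_eq_sq, nsq_eq_re_dot]
    have hsw : star w = star v ᵥ* Bz := by
      rw [hw, Matrix.star_mulVec, Matrix.conjTranspose_conjTranspose]
    rw [hsw, ← dotProduct_mulVec]
  have cs : (dotProduct (star v) (Bz *ᵥ w)).re ≤ l2norm v * (c * l2norm w) := by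
    have h1 : (dotProduct (star v) (Bz *ᵥ w)).re
        ≤ ‖(dotProduct (star v) (Bz *ᵥ w))‖ := Complex.re_le_norm _
    have h2 : dotProduct (star v) (Bz *ᵥ w)
        = inner ℂ ((WithLp.equiv 2 (Fin n → ℂ)).symm v) ((WithLp.equiv 2 (Fin n → ℂ)).symm (Bz *ᵥ w)) :=
      by rw [dotProduct_comm]; rfl
    calc (dotProduct (star v) (Bz *ᵥ w)).re ≤ _ := h1
      _ ≤ ‖(WithLp.equiv 2 (Fin n → ℂ)).symm v‖ * ‖(WithLp.equiv 2 (Fin n → ℂ)).symm (Bz *ᵥ w)‖ := by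
          rw [h2]; exact norm_inner_le_norm _ _
      _ = l2norm v * l2norm (Bz *ᵥ w) := by rw [l2norm_eq, l2norm_eq]
      _ ≤ l2norm v * (c * l2norm w) := by
          exact mul_le_mul_of_nonneg_left (h w) (l2norm_nonneg v)
  have hkey : l2norm w ^ 2 ≤ c * l2norm v * l2norm w := by
    rw [key]; calc _ ≤ l2norm v * (c * l2norm w) := cs
                 _ = c * l2norm v * l2norm w := by ring
  rcases eq_or_lt_of_le (l2norm_nonneg w) with h0 | h0
  · rw [← h0]
    have hc : 0 ≤ c * l2norm v := by
      by_contra hneg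
      push_neg at hneg
      have := h v
      nlinarith [l2norm_nonneg (Bz *ᵥ v), l2norm_nonneg v, hw ▸ h0]
    linarith
  · nlinarith

lemma completeness {M : ℕ} (e : Fin M → Fin M → ℂ)
    (he : ∀ z w, dotProduct (star (e z)) (e w) = if z = w then 1 else 0) :
    ∀ j j', ∑ z, conj (e z j) * e z j' = if j = j' then 1 else 0 := by
  have he' : ∀ z w, ∑ k, conj (e z k) * e w k = if z = w then 1 else 0 := by
    intro z w
    have := he z w
    simpa [dotProduct, Complex.star_def] using this
  set F : Matrix (Fin M) (Fin M) ℂ := Matrix.of (fun z j => conj (e z j)) with hF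
  have h1 : F * Fᴴ = 1 := by
    ext z w
    simp only [Matrix.mul_apply, Matrix.conjTranspose_apply, Matrix.of_apply, hF,
      Complex.star_def, Complex.conj_conj, Matrix.one_apply]
    exact he' z w
  have h2 : Fᴴ * F = 1 := mul_eq_one_comm.mp h1
  intro j j'
  have h3 : (Fᴴ * F) j j' = (1 : Matrix (Fin M) (Fin M) ℂ) j j' := by rw [h2]
  simp only [Matrix.mul_apply, Matrix.conjTranspose_apply, Matrix.of_apply, hF,
    Complex.star_def, Complex.conj_conj, Matrix.one_apply] at h3
  have h4 := congrArg (starRingEnd ℂ) h3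
  simp only [map_sum, _root_.map_mul, Complex.conj_conj] at h4
  rw [h4]
  split <;> simp

lemma sum_nsq_rows {dA M : ℕ} (G : Matrix (Fin dA) (Fin M) ℂ) (e : Fin M → Fin M → ℂ)
    (hee : ∀ j j', ∑ z, conj (e z j) * e z j' = if j = j' then 1 else 0) :
    (↑(∑ z, nsq (G.mulVec (e z))) : ℂ) = (Gᴴ * G).trace := by
  push_cast
  calc ∑ z, (↑(nsq (G.mulVec (e z))) : ℂ)
      = ∑ z, ∑ j, ∑ j', conj (e z j) * e z j' * (Gᴴ * G) j j' :=
        Finset.sum_congr rfl fun z _ => nsq_mulVec G (e z)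
    _ = ∑ j, ∑ j', (∑ z, conj (e z j) * e z j') * (Gᴴ * G) j j' := by
        rw [Finset.sum_comm]
        refine Finset.sum_congr rfl fun j _ => ?_
        rw [Finset.sum_comm]
        refine Finset.sum_congr rfl fun j' _ => ?_
        rw [Finset.sum_mul]
    _ = ∑ j, (Gᴴ * G) j j := by
        refine Finset.sum_congr rfl fun j _ => ?_
        simp [hee, ite_mul]
    _ = (Gᴴ * G).trace := rfl

lemma nsq_isometry {m n : ℕ} (W : Matrix (Fin m) (Fin n) ℂ) (hW : Wᴴ * W = 1)
    (u : Fin n → ℂ) : nsq (W.mulVec u) = nsq u := by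
  have h := nsq_mulVec W u
  rw [hW] at h
  have h2 : (↑(nsq (W.mulVec u)) : ℂ) = ↑(nsq u) := by
    rw [h]
    have : ∀ j : Fin n, ∑ j', conj (u j) * u j' * (1 : Matrix (Fin n) (Fin n) ℂ) j j'
        = conj (u j) * u j := by
      intro j
      simp [Matrix.one_apply, mul_ite]
    rw [Finset.sum_congr rfl fun j _ => this j]
    unfold nsq
    push_cast
    exact Finset.sum_congr rfl fun j _ => (Complex.normSq_eq_conj_mul_self).symm
  exact_mod_cast h2

lemma mul_outer_apply {N M : ℕ} (X : Matrix (Fin N) (Fin M) ℂ) (v : Fin M → ℂ)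
    (i : Fin N) (k : Fin M) : (X * outer v) i k = X.mulVec v i * conj (v k) := by
  simp only [Matrix.mul_apply, outer, Matrix.of_apply, Matrix.mulVec, dotProduct,
    Complex.star_def, Finset.sum_mul]
  exact Finset.sum_congr rfl fun j _ => by ring

lemma outer_mul_apply {N M : ℕ} (Y : Matrix (Fin M) (Fin N) ℂ) (v : Fin M → ℂ)
    (i : Fin M) (k : Fin N) : (outer v * Y) i k = v i * conj ((Yᴴ.mulVec v) k) := by
  simp only [Matrix.mul_apply, outer, Matrix.of_apply, Matrix.mulVec, dotProduct,
    Matrix.conjTranspose_apply, Complex.star_def, map_sum, _root_.map_mul,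
    Complex.conj_conj, Finset.mul_sum]
  exact Finset.sum_congr rfl fun j _ => by ring

lemma main_bound {dA M : ℕ} [NeZero dA]
    (W : Matrix (Fin M) (Fin dA) ℂ) (hW : Wᴴ * W = 1)
    (U : Matrix (Fin M) (Fin M) ℂ) (hU1 : Uᴴ * U = 1)
    (e : Fin M → Fin M → ℂ)
    (hee : ∀ j j', ∑ z, conj (e z j) * e z j' = if j = j' then 1 else 0)
    (C : Fin M → Matrix (Fin dA) (Fin dA) ℂ)
    (hC : ∀ z (v : Fin dA → ℂ), l2norm ((C z).mulVec v) ≤ (dA : ℝ)⁻¹ * l2norm v) :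
    ∑ z, nsq ((W * C z * Wᴴ * Uᴴ).mulVec (e z)) ≤ (dA : ℝ)⁻¹ := by
  have hdA : (dA : ℝ) ≠ 0 := Nat.cast_ne_zero.mpr (NeZero.ne dA)
  set G : Matrix (Fin dA) (Fin M) ℂ := Wᴴ * Uᴴ with hG
  have h1 : ∀ z, (W * C z * Wᴴ * Uᴴ).mulVec (e z)
      = W.mulVec ((C z).mulVec (G.mulVec (e z))) := by
    intro z
    rw [Matrix.mulVec_mulVec, Matrix.mulVec_mulVec, hG, ← Matrix.mul_assoc (W * C z) Wᴴ Uᴴ]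
  have h3 : ∀ z, nsq ((W * C z * Wᴴ * Uᴴ).mulVec (e z))
      ≤ (dA : ℝ)⁻¹ ^ 2 * nsq (G.mulVec (e z)) := by
    intro z
    rw [h1 z, nsq_isometry W hW]
    have := hC z (G.mulVec (e z))
    have hsq := pow_le_pow_left₀ (l2norm_nonneg _) this 2
    rw [mul_pow] at hsq
    rw [nsq_eq_sq, nsq_eq_sq]
    exact hsq
  have h4 : ∑ z, nsq (G.mulVec (e z)) = (dA : ℝ) := by
    have h5 := sum_nsq_rows G e hee
    have h6 : (Gᴴ * G).trace = (dA : ℂ) := by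
      have h7 : Gᴴ = U * W := by
        rw [hG, Matrix.conjTranspose_mul, Matrix.conjTranspose_conjTranspose,
          Matrix.conjTranspose_conjTranspose]
      rw [h7, Matrix.trace_mul_comm, hG, Matrix.mul_assoc Wᴴ Uᴴ (U * W),
        ← Matrix.mul_assoc Uᴴ U W, hU1, Matrix.one_mul, hW]
      simp
    exact_mod_cast h5.trans h6
  calc ∑ z, nsq ((W * C z * Wᴴ * Uᴴ).mulVec (e z))
      ≤ ∑ z, (dA : ℝ)⁻¹ ^ 2 * nsq (G.mulVec (e z)) := Finset.sum_le_sum fun z _ => h3 z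
    _ = (dA : ℝ)⁻¹ ^ 2 * ∑ z, nsq (G.mulVec (e z)) := by rw [Finset.mul_sum]
    _ = (dA : ℝ)⁻¹ := by rw [h4]; field_simp

/-- for an isometry `W : ℂ^{d_A} → ℂ^M`, a unitary `U ∈ U(M)`, an orthonormal
basis `{|z⟩}` of `ℂ^M` and matrices `B_z` with operator norm `‖B_z‖ ≤ 1/d_A`,
`‖∑_z (W B_z W† U† |z⟩⟨z| − |z⟩⟨z| U W B_z W†)‖₂ ≤ 2/√d_A`. -/
theorem hsNorm_commutator_sum_le {dA M : ℕ} [NeZero dA]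
    (W : Matrix (Fin M) (Fin dA) ℂ) (hW : Wᴴ * W = 1)
    (U : Matrix (Fin M) (Fin M) ℂ) (hU : U ∈ Matrix.unitaryGroup (Fin M) ℂ)
    (e : Fin M → Fin M → ℂ)
    (he : ∀ z w, dotProduct (star (e z)) (e w) = if z = w then 1 else 0)
    (B : Fin M → Matrix (Fin dA) (Fin dA) ℂ)
    (hB : ∀ z (v : Fin dA → ℂ), l2norm ((B z).mulVec v) ≤ (dA : ℝ)⁻¹ * l2norm v) :
    hsNorm (∑ z, (W * B z * Wᴴ * Uᴴ * outer (e z) - outer (e z) * U * W * B z * Wᴴ))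
      ≤ 2 / Real.sqrt dA := by
  have hU1 : Uᴴ * U = 1 := by
    have := hU.1
    rwa [Matrix.star_eq_conjTranspose] at this
  have he' : ∀ z w, ∑ k, conj (e z k) * e w k = if z = w then 1 else 0 := by
    intro z w
    simpa [dotProduct, Complex.star_def] using he z w
  have hee := completeness e he
  set T := ∑ z, W * B z * Wᴴ * Uᴴ * outer (e z) with hT
  set S := ∑ z, outer (e z) * U * W * B z * Wᴴ with hS
  have hsplit : (∑ z, (W * B z * Wᴴ * Uᴴ * outer (e z) - outer (e z) * U * W * B z * Wᴴ))
      = T - S := Finset.sum_sub_distrib _ _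
  rw [hsplit]
  -- bound on T
  have hTbound : hsNorm T ≤ Real.sqrt ((dA : ℝ)⁻¹) := by
    rw [hsNorm_eq]
    have hentry : ∀ i k, T i k
        = ∑ z, ((W * B z * Wᴴ * Uᴴ).mulVec (e z)) i * conj (e z k) := by
      intro i k
      rw [hT, Matrix.sum_apply]
      exact Finset.sum_congr rfl fun z _ => mul_outer_apply _ _ i k
    have hc : ∀ z w, ∑ k, conj (conj (e z k)) * conj (e w k) = if z = w then 1 else 0 := by
      intro z w
      have h := congrArg (starRingEnd ℂ) (he' z w)
      simp only [map_sum, _root_.map_mul, Complex.conj_conj] at h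
      simp only [Complex.conj_conj]
      rw [h]
      split <;> simp
    have hkey : ∑ i, ∑ k, Complex.normSq (T i k)
        = ∑ z, nsq ((W * B z * Wᴴ * Uᴴ).mulVec (e z)) := by
      calc ∑ i, ∑ k, Complex.normSq (T i k)
          = ∑ i, ∑ k, Complex.normSq
              (∑ z, ((W * B z * Wᴴ * Uᴴ).mulVec (e z)) i * conj (e z k)) := by
            exact Finset.sum_congr rfl fun i _ => Finset.sum_congr rfl fun k _ => by
              rw [hentry]
        _ = ∑ z, nsq ((W * B z * Wᴴ * Uᴴ).mulVec (e z)) :=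
            sum_normSq_orth _ (fun z k => conj (e z k)) hc
    rw [hkey]
    exact Real.sqrt_le_sqrt (main_bound W hW U hU1 e hee B hB)
  -- bound on S
  have hSbound : hsNorm S ≤ Real.sqrt ((dA : ℝ)⁻¹) := by
    rw [hsNorm_eq]
    have hadj : ∀ z, (U * W * B z * Wᴴ)ᴴ = W * (B z)ᴴ * Wᴴ * Uᴴ := by
      intro z
      simp [Matrix.conjTranspose_mul, Matrix.mul_assoc]
    have hentry : ∀ i k, S i k
        = ∑ z, conj (((W * (B z)ᴴ * Wᴴ * Uᴴ).mulVec (e z)) k) * e z i := by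
      intro i k
      rw [hS, Matrix.sum_apply]
      refine Finset.sum_congr rfl fun z _ => ?_
      have hass : outer (e z) * U * W * B z * Wᴴ = outer (e z) * (U * W * B z * Wᴴ) := by
        simp [Matrix.mul_assoc]
      rw [hass, outer_mul_apply, hadj z]
      ring
    have hkey : ∑ i, ∑ k, Complex.normSq (S i k)
        = ∑ z, nsq ((W * (B z)ᴴ * Wᴴ * Uᴴ).mulVec (e z)) := by
      calc ∑ i, ∑ k, Complex.normSq (S i k)
          = ∑ k, ∑ i, Complex.normSq (S i k) := Finset.sum_comm
        _ = ∑ k, ∑ i, Complex.normSq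
              (∑ z, conj (((W * (B z)ᴴ * Wᴴ * Uᴴ).mulVec (e z)) k) * e z i) := by
            exact Finset.sum_congr rfl fun k _ => Finset.sum_congr rfl fun i _ => by
              rw [hentry]
        _ = ∑ z, nsq (fun k => conj (((W * (B z)ᴴ * Wᴴ * Uᴴ).mulVec (e z)) k)) :=
            sum_normSq_orth _ e he'
        _ = ∑ z, nsq ((W * (B z)ᴴ * Wᴴ * Uᴴ).mulVec (e z)) := by
            refine Finset.sum_congr rfl fun z _ => ?_
            simp [nsq, Complex.normSq_conj]
    rw [hkey]
    refine Real.sqrt_le_sqrt (main_bound W hW U hU1 e hee (fun z => (B z)ᴴ) ?_)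
    intro z v
    exact l2norm_conjTranspose_mulVec_le (B z) _ (hB z) v
  calc hsNorm (T - S) ≤ hsNorm T + hsNorm S := hsNorm_sub_le T S
    _ ≤ Real.sqrt ((dA : ℝ)⁻¹) + Real.sqrt ((dA : ℝ)⁻¹) := add_le_add hTbound hSbound
    _ = 2 / Real.sqrt dA := by
        rw [Real.sqrt_inv]
        ring
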